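/- Let B ⊂ ℝ² be the unit ball, p > 1, 0 ≤ α ≤ β, κ = (β+2)/(α+2) ≥ 1. Let u_α be a radial solution of -Δu = |x|^α|u|^{p-1}u in B with zero boundary values, and u_β(y) = κ^{2/(p-1)} u_α(T_κ y). Define quadratic forms Q_α(w) = ∫_B |∇w|² dx - p∫_B |x|^α |u_α|^{p-1} w² dx and Q_β analogously. Then for every w ∈ C^∞_c(B \ {0}), setting w_κ = w ∘ T_κ, one has Q_β(w_κ) ≤ κ Q_α(w), with equality whenever w is radial. -/

import Mathlib

open MeasureTheory

/-- The transformation `T κ (y) = |y|^(κ-1) y` on `ℝ²` (with `T κ 0 = 0`). -/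
noncomputable def T (κ : ℝ) (y : EuclideanSpace ℝ (Fin 2)) : EuclideanSpace ℝ (Fin 2) :=
  (‖y‖ ^ (κ - 1) : ℝ) • y

/-- The Laplacian on `ℝ²` as the sum of the second directional derivatives. -/
noncomputable def lap (u : EuclideanSpace ℝ (Fin 2) → ℝ) (x : EuclideanSpace ℝ (Fin 2)) : ℝ :=
  ∑ i : Fin 2,
    fderiv ℝ (fun z => fderiv ℝ u z (EuclideanSpace.single i 1)) x (EuclideanSpace.single i 1)

/-- The quadratic form `Q_γ(w) = ∫_B |∇w|² - p ∫_B |x|^γ |u|^(p-1) w²` associated to the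
linearization of the Hénon equation at a solution `u`, on the unit ball `B`. -/
noncomputable def Q (p γ : ℝ) (u w : EuclideanSpace ℝ (Fin 2) → ℝ) : ℝ :=
  (∫ x in Metric.ball (0 : EuclideanSpace ℝ (Fin 2)) 1, ‖gradient w x‖ ^ 2) -
    p * ∫ x in Metric.ball (0 : EuclideanSpace ℝ (Fin 2)) 1, ‖x‖ ^ γ * |u x| ^ (p - 1) * (w x) ^ 2

section Aux

open RealInnerProductSpace InnerProductSpace

noncomputable abbrev E2 := EuclideanSpace ℝ (Fin 2)

/-- The derivative of `T κ` at `y ≠ 0`. -/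
noncomputable def Dmap (κ : ℝ) (y : E2) : E2 →L[ℝ] E2 :=
  (‖y‖ ^ (κ - 1) : ℝ) • ContinuousLinearMap.id ℝ E2 +
    (((κ - 1) * ‖y‖ ^ (κ - 3) : ℝ) • (innerSL ℝ y)).smulRight y

lemma Dmap_apply (κ : ℝ) (y v : E2) :
    Dmap κ y v = (‖y‖ ^ (κ - 1) : ℝ) • v + ((κ - 1) * ‖y‖ ^ (κ - 3) * ⟪y, v⟫) • y := by
  simp [Dmap, smul_smul]

lemma hasFDerivAt_T (κ : ℝ) {y : E2} (hy : y ≠ 0) : HasFDerivAt (T κ) (Dmap κ y) y := by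
  have hny : (0:ℝ) < ‖y‖ := norm_pos_iff.mpr hy
  have h1 : HasFDerivAt (fun z : E2 => ‖z‖ ^ 2) (2 • (innerSL ℝ y)) y :=
    (hasStrictFDerivAt_norm_sq y).hasFDerivAt
  have h2 : HasDerivAt (fun t : ℝ => t ^ ((κ-1)/2)) (((κ-1)/2) * (‖y‖^2) ^ ((κ-1)/2 - 1)) (‖y‖^2) :=
    Real.hasDerivAt_rpow_const (Or.inl (by positivity))
  have h3 : HasFDerivAt (fun z : E2 => (‖z‖ ^ 2 : ℝ) ^ ((κ-1)/2))
      ((((κ-1)/2) * (‖y‖^2) ^ ((κ-1)/2 - 1)) • (2 • (innerSL ℝ y))) y :=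
    by have := h2.comp_hasFDerivAt y h1; exact this
  have h4 : HasFDerivAt (fun z : E2 => ((‖z‖ ^ 2 : ℝ) ^ ((κ-1)/2)) • z)
      (((‖y‖ ^ 2 : ℝ) ^ ((κ-1)/2)) • ContinuousLinearMap.id ℝ E2 +
        ((((κ-1)/2) * (‖y‖^2) ^ ((κ-1)/2 - 1)) • (2 • (innerSL ℝ y))).smulRight y) y :=
    h3.smul (hasFDerivAt_id y)
  have hsq : ∀ z : E2, ((‖z‖ ^ 2 : ℝ) ^ ((κ-1)/2)) = ‖z‖ ^ (κ - 1) := by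
    intro z
    rw [← Real.rpow_natCast ‖z‖ 2, ← Real.rpow_mul (norm_nonneg z)]
    congr 1; ring
  have hsq3 : ((‖y‖ ^ 2 : ℝ) ^ ((κ-1)/2 - 1)) = ‖y‖ ^ (κ - 3) := by
    rw [← Real.rpow_natCast ‖y‖ 2, ← Real.rpow_mul (norm_nonneg y)]
    congr 1; ring
  convert h4 using 1
  · funext z; rw [T, hsq]
  · rw [Dmap, hsq y, hsq3]
    congr 1
    congr 1
    ext v
    simp [smul_smul]
    ring

lemma normsq_eq (y : E2) : y 0 * y 0 + y 1 * y 1 = ‖y‖ ^ (2:ℕ) := by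
  rw [← real_inner_self_eq_norm_sq]
  simp only [PiLp.inner_apply, Fin.sum_univ_two, RCLike.inner_apply, conj_trivial]

lemma Dmap_det {κ : ℝ} {y : E2} (hy : y ≠ 0) :
    (Dmap κ y).det = κ * ‖y‖ ^ (2*κ - 2) := by
  have hny : (0:ℝ) < ‖y‖ := norm_pos_iff.mpr hy
  have hb : ((Dmap κ y) : E2 →ₗ[ℝ] E2).det =
      Matrix.det (LinearMap.toMatrix (EuclideanSpace.basisFun (Fin 2) ℝ).toBasis
        (EuclideanSpace.basisFun (Fin 2) ℝ).toBasis ((Dmap κ y) : E2 →ₗ[ℝ] E2)) :=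
    (LinearMap.det_toMatrix _ _).symm
  rw [ContinuousLinearMap.det, hb, Matrix.det_fin_two]
  have happ : ∀ i j : Fin 2, (LinearMap.toMatrix (EuclideanSpace.basisFun (Fin 2) ℝ).toBasis
      (EuclideanSpace.basisFun (Fin 2) ℝ).toBasis ((Dmap κ y) : E2 →ₗ[ℝ] E2)) i j
      = (‖y‖ ^ (κ-1)) * (if i = j then 1 else 0) + ((κ - 1) * ‖y‖ ^ (κ - 3)) * y j * y i := by
    intro i j
    rw [LinearMap.toMatrix_apply]
    have : ((Dmap κ y) : E2 →ₗ[ℝ] E2) ((EuclideanSpace.basisFun (Fin 2) ℝ).toBasis j)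
        = (‖y‖ ^ (κ - 1) : ℝ) • (EuclideanSpace.single j (1:ℝ))
          + ((κ - 1) * ‖y‖ ^ (κ - 3) * (y j)) • y := by
      rw [OrthonormalBasis.coe_toBasis, EuclideanSpace.basisFun_apply]
      rw [ContinuousLinearMap.coe_coe, Dmap_apply]
      congr 2
      rw [EuclideanSpace.inner_single_right]
      simp
    rw [this]
    simp only [OrthonormalBasis.coe_toBasis_repr_apply, OrthonormalBasis.repr_apply_apply]
    rw [EuclideanSpace.basisFun_apply, inner_add_right, real_inner_smul_right,
      real_inner_smul_right, EuclideanSpace.inner_single_left, EuclideanSpace.inner_single_left]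
    simp [EuclideanSpace.single_apply]
  rw [happ, happ, happ, happ]
  have h1 : ‖y‖ ^ (κ-1) * ‖y‖ ^ (κ-1) = ‖y‖ ^ (2*κ-2) := by
    rw [← Real.rpow_add hny]; congr 1; ring
  have h2 : ‖y‖ ^ (κ-1) * ‖y‖ ^ (κ-3) * (‖y‖ ^ (2:ℕ)) = ‖y‖ ^ (2*κ-2) := by
    rw [← Real.rpow_natCast ‖y‖ 2, ← Real.rpow_add hny, ← Real.rpow_add hny]; congr 1; push_cast; ring
  have hn2 := normsq_eq y
  norm_num
  linear_combination h1 + (κ-1)*h2 + ((κ-1)*‖y‖^(κ-3)*‖y‖^(κ-1))*hn2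

lemma T_zero (κ : ℝ) : T κ 0 = 0 := by simp [T]

lemma norm_T {κ : ℝ} (hκ : κ ≠ 0) (y : E2) : ‖T κ y‖ = ‖y‖ ^ κ := by
  rcases eq_or_ne y 0 with rfl | hy
  · simp [T, Real.zero_rpow hκ]
  · have hny : (0:ℝ) < ‖y‖ := norm_pos_iff.mpr hy
    rw [T, norm_smul, Real.norm_eq_abs, abs_of_nonneg (Real.rpow_nonneg (norm_nonneg y) _),
      ← Real.rpow_add_one hny.ne']
    congr 1; ring

lemma T_left_inv {κ : ℝ} (hκ : 0 < κ) (y : E2) : T (1/κ) (T κ y) = y := by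
  rcases eq_or_ne y 0 with rfl | hy
  · simp [T]
  · have hny : (0:ℝ) < ‖y‖ := norm_pos_iff.mpr hy
    rw [T, norm_T hκ.ne', T, smul_smul, ← Real.rpow_mul (norm_nonneg y), ← Real.rpow_add hny]
    have : κ * (1/κ - 1) + (κ - 1) = 0 := by field_simp; ring
    rw [this, Real.rpow_zero, one_smul]

lemma T_mem_s {κ : ℝ} (hκ : 0 < κ) {y : E2}
    (hy : y ∈ Metric.ball (0:E2) 1 \ {0}) : T κ y ∈ Metric.ball (0:E2) 1 \ {0} := by
  obtain ⟨hy1, hy2⟩ := hy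
  have hny : (0:ℝ) < ‖y‖ := norm_pos_iff.mpr hy2
  rw [Metric.mem_ball, dist_zero_right] at hy1
  constructor
  · rw [Metric.mem_ball, dist_zero_right, norm_T hκ.ne']
    exact Real.rpow_lt_one (norm_nonneg y) hy1 hκ
  · simp only [Set.mem_singleton_iff]
    intro h
    have := norm_T hκ.ne' y
    rw [h, norm_zero] at this
    exact absurd ((Real.rpow_pos_of_pos hny κ).trans_eq this.symm) (lt_irrefl 0)

lemma T_image {κ : ℝ} (hκ : 0 < κ) :
    T κ '' (Metric.ball (0:E2) 1 \ {0}) = Metric.ball (0:E2) 1 \ {0} := by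
  apply Set.Subset.antisymm
  · rintro x ⟨y, hy, rfl⟩; exact T_mem_s hκ hy
  · intro x hx
    refine ⟨T (1/κ) x, T_mem_s (by positivity) hx, ?_⟩
    have := T_left_inv (show (0:ℝ) < 1/κ by positivity) x
    rwa [one_div_one_div] at this

lemma T_injOn {κ : ℝ} (hκ : 0 < κ) : Set.InjOn (T κ) (Metric.ball (0:E2) 1 \ {0}) := by
  intro a _ b _ h
  have := congrArg (T (1/κ)) h
  rwa [T_left_inv hκ, T_left_inv hκ] at this

lemma gradient_comp_T {κ : ℝ} {w : E2 → ℝ} (hw : ContDiff ℝ (⊤ : ℕ∞) w) {y : E2} (hy : y ≠ 0) :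
    gradient (w ∘ T κ) y = Dmap κ y (gradient w (T κ y)) := by
  have hdw : DifferentiableAt ℝ w (T κ y) := (hw.differentiable (by simp)).differentiableAt
  have hfd : fderiv ℝ w (T κ y) = toDual ℝ E2 (gradient w (T κ y)) := by
    rw [gradient, LinearIsometryEquiv.apply_symm_apply]
  have hchain : HasFDerivAt (w ∘ T κ) ((fderiv ℝ w (T κ y)).comp (Dmap κ y)) y :=
    hdw.hasFDerivAt.comp y (hasFDerivAt_T κ hy)
  have hkey : (fderiv ℝ w (T κ y)).comp (Dmap κ y)
      = toDual ℝ E2 (Dmap κ y (gradient w (T κ y))) := by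
    ext v
    rw [ContinuousLinearMap.comp_apply, hfd]
    rw [toDual_apply_apply, toDual_apply_apply, Dmap_apply, Dmap_apply]
    set G := gradient w (T κ y)
    simp only [inner_add_left, inner_add_right, real_inner_smul_left, real_inner_smul_right]
    rw [real_inner_comm G y]
    ring
  rw [hkey] at hchain
  exact (hasFDerivAt_iff_hasGradientAt.mp hchain).gradient.trans (by
    rw [LinearIsometryEquiv.symm_apply_apply])

lemma Dmap_norm_sq {κ : ℝ} (hκ : 0 < κ) {y : E2} (hy : y ≠ 0) (G : E2) :
    ‖Dmap κ y G‖ ^ (2:ℕ) =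
      (κ * ‖y‖ ^ (2*κ-2)) * ((1/κ) * (‖G‖^(2:ℕ) + (κ^(2:ℕ) - 1) * (⟪y, G⟫ / ‖y‖)^(2:ℕ))) := by
  have hny : (0:ℝ) < ‖y‖ := norm_pos_iff.mpr hy
  set a := ‖y‖ ^ (κ-1) with ha
  set b := (κ-1) * ‖y‖ ^ (κ-3) with hb
  have ha2 : a * a = ‖y‖ ^ (2*κ-2) := by
    rw [ha, ← Real.rpow_add hny]; congr 1; ring
  have hbN : b * (‖y‖ * ‖y‖) = (κ - 1) * a := by
    have hyy : ‖y‖ * ‖y‖ = ‖y‖ ^ (2:ℝ) := by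
      rw [show (2:ℝ) = ((2:ℕ):ℝ) by norm_num, Real.rpow_natCast]; ring
    rw [hb, ha, mul_assoc, hyy, ← Real.rpow_add hny]
    congr 2
    ring
  have hexp : ‖Dmap κ y G‖ ^ (2:ℕ) = a^2 * ‖G‖^2 + 2*a*b*⟪y,G⟫^2 + b^2*⟪y,G⟫^2*(‖y‖*‖y‖) := by
    rw [Dmap_apply, ← ha, ← hb, ← real_inner_self_eq_norm_sq]
    simp only [inner_add_left, inner_add_right, real_inner_smul_left, real_inner_smul_right]
    rw [real_inner_comm G y, real_inner_self_eq_norm_sq y, real_inner_self_eq_norm_sq G]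
    ring
  have hform : ∀ Z:ℝ, (κ * ‖y‖ ^ (2*κ-2)) * ((1/κ) * Z) = ‖y‖ ^ (2*κ-2) * Z := by
    intro Z; field_simp
  rw [hexp, hform]
  have hI : ⟪y,G⟫^2 = (⟪y,G⟫/‖y‖)^2 * (‖y‖*‖y‖) := by
    field_simp
  rw [hI]
  linear_combination (‖G‖^2 + (κ^2-1)*(⟪y,G⟫/‖y‖)^2) * ha2 +
    ((b*(‖y‖*‖y‖) - (κ-1)*a + 2*κ*a) * (⟪y,G⟫/‖y‖)^2) * hbN

lemma gradient_eq_zero_of_nmem {w : E2 → ℝ} {z : E2} (hz : z ∉ tsupport w) :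
    gradient w z = 0 := by
  have hev : w =ᶠ[nhds z] (fun _ => (0:ℝ)) := by
    filter_upwards [(isClosed_tsupport w).isOpen_compl.mem_nhds hz] with t ht
    exact image_eq_zero_of_notMem_tsupport ht
  rw [gradient, hev.fderiv_eq, fderiv_fun_const]
  simp

lemma continuous_gradient {w : E2 → ℝ} (hw : ContDiff ℝ (⊤ : ℕ∞) w) : Continuous (gradient w) := by
  have h1 : Continuous (fun x => fderiv ℝ w x) := hw.continuous_fderiv (by simp)
  exact (toDual ℝ E2).symm.continuous.comp h1

lemma radial_key {w : E2 → ℝ} (hw : ContDiff ℝ (⊤ : ℕ∞) w) (W : ℝ → ℝ) (hWrad : ∀ x, w x = W ‖x‖)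
    {x : E2} (hx : x ≠ 0) :
    ⟪x, gradient w x⟫ ^ (2:ℕ) = (‖x‖ * ‖x‖) * ‖gradient w x‖ ^ (2:ℕ) := by
  have hnx : (0:ℝ) < ‖x‖ := norm_pos_iff.mpr hx
  have hN : (0:ℝ) < ‖x‖^(2:ℕ) := by positivity
  set N : ℝ := ‖x‖^(2:ℕ) with hNdef
  set Rlin : E2 →L[ℝ] E2 :=
    (((2/N) : ℝ) • (innerSL ℝ x)).smulRight x - ContinuousLinearMap.id ℝ E2 with hRdef
  have hRapp : ∀ z, Rlin z = ((2/N) * ⟪x, z⟫) • x - z := by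
    intro z; simp [hRdef, smul_smul]
  have hRnorm : ∀ z, ‖Rlin z‖ = ‖z‖ := by
    intro z
    have h1 : ‖Rlin z‖^(2:ℕ) = ‖z‖^(2:ℕ) := by
      rw [hRapp, ← real_inner_self_eq_norm_sq, ← real_inner_self_eq_norm_sq]
      simp only [inner_sub_left, inner_sub_right, real_inner_smul_left, real_inner_smul_right]
      rw [real_inner_self_eq_norm_sq x, ← hNdef, real_inner_comm z x]
      field_simp
      ring
    have h2 := congrArg Real.sqrt h1
    rwa [Real.sqrt_sq (norm_nonneg _), Real.sqrt_sq (norm_nonneg _)] at h2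
  have hwR : w ∘ Rlin = w := by
    funext z
    rw [Function.comp_apply, hWrad (Rlin z), hWrad z, hRnorm]
  have hdw : DifferentiableAt ℝ w (Rlin x) := (hw.differentiable (by simp)).differentiableAt
  have hRx : Rlin x = x := by
    rw [hRapp, real_inner_self_eq_norm_sq x, ← hNdef, div_mul_cancel₀ _ hN.ne', two_smul]
    abel
  have h1 : HasFDerivAt (w ∘ Rlin) ((fderiv ℝ w (Rlin x)).comp Rlin) x :=
    hdw.hasFDerivAt.comp x Rlin.hasFDerivAt
  rw [hwR, hRx] at h1
  have huniq : fderiv ℝ w x = (fderiv ℝ w x).comp Rlin := h1.fderiv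
  set g := gradient w x with hgdef
  have hfd : fderiv ℝ w x = toDual ℝ E2 g := by
    rw [hgdef, gradient, LinearIsometryEquiv.apply_symm_apply]
  have hfdapp : ∀ v, ⟪g, v⟫ = ⟪g, Rlin v⟫ := by
    intro v
    have e1 : fderiv ℝ w x v = (fderiv ℝ w x).comp Rlin v := by rw [← huniq]
    rw [ContinuousLinearMap.comp_apply, hfd, toDual_apply_apply, toDual_apply_apply] at e1
    exact e1
  set c : ℝ := ⟪x, g⟫ / N with hcdef
  set v : E2 := g - c • x with hvdef
  have hxv : ⟪x, v⟫ = 0 := by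
    rw [hvdef, inner_sub_right, real_inner_smul_right, real_inner_self_eq_norm_sq x, ← hNdef,
      hcdef, div_mul_cancel₀ _ hN.ne', sub_self]
  have hRv : Rlin v = -v := by
    rw [hRapp, hxv, mul_zero, zero_smul, zero_sub]
  have hgv : ⟪g, v⟫ = 0 := by
    have := hfdapp v
    rw [hRv, inner_neg_right] at this
    linarith
  have hexp : ⟪g, v⟫ = ‖g‖^(2:ℕ) - ⟪x, g⟫^(2:ℕ)/N := by
    rw [hvdef, inner_sub_right, real_inner_smul_right, real_inner_self_eq_norm_sq g, hcdef,
      real_inner_comm g x]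
    ring
  rw [hexp] at hgv
  have h3 : ⟪x, g⟫^(2:ℕ) / N = ‖g‖^(2:ℕ) := by linarith
  have h4 := (div_eq_iff hN.ne').mp h3
  rw [h4, hNdef]
  ring

lemma dirichlet_pointwise {κ : ℝ} (hκ0 : 0 < κ) {w : E2 → ℝ} (hw : ContDiff ℝ (⊤ : ℕ∞) w) {y : E2}
    (hy : y ≠ 0) :
    ‖gradient (w ∘ T κ) y‖^(2:ℕ) = |(Dmap κ y).det| *
      ((1/κ) * (‖gradient w (T κ y)‖^(2:ℕ) +
        (κ^(2:ℕ)-1) * (⟪T κ y, gradient w (T κ y)⟫/‖T κ y‖)^(2:ℕ))) := by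
  have hny : (0:ℝ) < ‖y‖ := norm_pos_iff.mpr hy
  have hratio : ⟪T κ y, gradient w (T κ y)⟫/‖T κ y‖ = ⟪y, gradient w (T κ y)⟫/‖y‖ := by
    set G := gradient w (T κ y) with hG
    rw [norm_T hκ0.ne',
      show (⟪T κ y, G⟫ : ℝ) = ‖y‖^(κ-1) * ⟪y, G⟫ from by rw [T, real_inner_smul_left],
      show ‖y‖^κ = ‖y‖^(κ-1) * ‖y‖ from by rw [← Real.rpow_add_one hny.ne']; congr 1; ring,
      mul_div_mul_left _ _ (by positivity : (‖y‖:ℝ)^(κ-1) ≠ 0)]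
  rw [hratio, gradient_comp_T hw hy, Dmap_norm_sq hκ0 hy, Dmap_det hy,
    abs_of_nonneg (mul_nonneg hκ0.le (Real.rpow_nonneg (norm_nonneg y) _))]

lemma pot_pointwise (p κ α β : ℝ) (hp : 1 < p) (hκ0 : 0 < κ) (hκβ : 2*κ - 2 + κ*α = β)
    (uα uβ : E2 → ℝ) (huβ : ∀ y, uβ y = κ ^ (2 / (p - 1)) * uα (T κ y))
    (w : E2 → ℝ) {y : E2} (hy : y ≠ 0) :
    ‖y‖ ^ β * |uβ y| ^ (p-1) * (w (T κ y))^(2:ℕ)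
      = |(Dmap κ y).det| * (κ * (‖T κ y‖ ^ α * |uα (T κ y)| ^ (p-1) * (w (T κ y))^(2:ℕ))) := by
  have hny : (0:ℝ) < ‖y‖ := norm_pos_iff.mpr hy
  have hp1 : p - 1 ≠ 0 := by linarith
  rw [Dmap_det hy, abs_of_nonneg (mul_nonneg hκ0.le (Real.rpow_nonneg (norm_nonneg y) _))]
  rw [huβ y, abs_mul, abs_of_nonneg (Real.rpow_nonneg hκ0.le _)]
  rw [Real.mul_rpow (Real.rpow_nonneg hκ0.le _) (abs_nonneg _)]
  have hκ2 : (κ ^ (2/(p-1))) ^ (p-1) = κ^(2:ℕ) := by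
    rw [← Real.rpow_mul hκ0.le, div_mul_cancel₀ _ hp1,
      show (2:ℝ) = ((2:ℕ):ℝ) by norm_num, Real.rpow_natCast]
  rw [hκ2, norm_T hκ0.ne', ← Real.rpow_mul (norm_nonneg y)]
  rw [show β = (2*κ-2) + κ*α from by linarith, Real.rpow_add hny]
  ring

end Aux

/-- Proposition: `Q_β(w_κ) ≤ κ Q_α(w)` for all `w ∈ C_c^∞(B \ {0})`, with equality
whenever `w` is radial. Here `u_α` is a radial solution of `(P_α)`, `κ = (β+2)/(α+2) ≥ 1`,
`u_β(y) = κ^(2/(p-1)) u_α(T κ y)` and `w_κ = w ∘ T κ`. -/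
theorem stmt11 (p : ℝ) (hp : 1 < p) (α β : ℝ) (hα : 0 ≤ α) (hαβ : α ≤ β)
    (κ : ℝ) (hκ : κ = (β + 2) / (α + 2))
    (uα : EuclideanSpace ℝ (Fin 2) → ℝ)
    (hreg : ContDiffOn ℝ 2 uα (Metric.ball 0 1))
    (hrad : ∃ U : ℝ → ℝ, ∀ x ∈ Metric.ball (0 : EuclideanSpace ℝ (Fin 2)) 1, uα x = U ‖x‖)
    (hpde : ∀ x ∈ Metric.ball (0 : EuclideanSpace ℝ (Fin 2)) 1,
      -lap uα x = ‖x‖ ^ α * |uα x| ^ (p - 1) * uα x)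
    (hbd : ∀ x : EuclideanSpace ℝ (Fin 2), ‖x‖ = 1 → uα x = 0)
    (uβ : EuclideanSpace ℝ (Fin 2) → ℝ)
    (huβ : ∀ y, uβ y = κ ^ (2 / (p - 1)) * uα (T κ y))
    (w : EuclideanSpace ℝ (Fin 2) → ℝ) (hw : ContDiff ℝ (⊤ : ℕ∞) w)
    (hwsupp : tsupport w ⊆ Metric.ball (0 : EuclideanSpace ℝ (Fin 2)) 1 \ {0}) :
    Q p β uβ (w ∘ T κ) ≤ κ * Q p α uα w ∧
    ((∃ W : ℝ → ℝ, ∀ x, w x = W ‖x‖) → Q p β uβ (w ∘ T κ) = κ * Q p α uα w) := by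
  classical
  open RealInnerProductSpace InnerProductSpace in
  -- basic facts about κ
  have hα2 : (0:ℝ) < α + 2 := by linarith
  have hκ1 : 1 ≤ κ := by rw [hκ, le_div_iff₀ hα2]; linarith
  have hκ0 : (0:ℝ) < κ := lt_of_lt_of_le one_pos hκ1
  have hκβ : 2*κ - 2 + κ*α = β := by
    have : κ * (α + 2) = β + 2 := by rw [hκ]; field_simp
    linarith
  set B : Set E2 := Metric.ball (0 : E2) 1 with hBdef
  set s : Set E2 := B \ {0} with hsdef
  have hsm : MeasurableSet s := measurableSet_ball.diff (measurableSet_singleton _)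
  have hBm : MeasurableSet B := measurableSet_ball
  have hae : s =ᵐ[volume] B := diff_null_ae_eq_self (measure_singleton _)
  have hsne : ∀ y ∈ s, y ≠ 0 := fun y hy => by
    simpa [Set.mem_singleton_iff] using hy.2
  -- support facts
  have hK0 : (0:E2) ∉ tsupport w := fun h => (hwsupp h).2 rfl
  have hKB : tsupport w ⊆ B := fun x hx => (hwsupp hx).1
  have hKcpt : IsCompact (tsupport w) :=
    Metric.isCompact_of_isClosed_isBounded (isClosed_tsupport w)
      (Metric.isBounded_ball.subset hKB)
  set G1 : E2 → ℝ := fun x =>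
    (1/κ) * (‖gradient w x‖^(2:ℕ) +
      (κ^(2:ℕ)-1) * (⟪x, gradient w x⟫/‖x‖)^(2:ℕ)) with hG1def
  -- continuity and integrability of G1 and of ‖∇w‖²
  have hgcont : Continuous (gradient w) := continuous_gradient hw
  have hgsupp : Function.support (gradient w) ⊆ tsupport w := fun x hx => by
    by_contra h
    exact hx (gradient_eq_zero_of_nmem h)
  have hcont1 : Continuous (fun x : E2 => κ * ‖gradient w x‖^(2:ℕ)) :=
    continuous_const.mul (hgcont.norm.pow 2)
  obtain ⟨ε, hε0, hεsub⟩ : ∃ ε > 0, Metric.ball (0:E2) ε ⊆ (tsupport w)ᶜ :=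
    Metric.isOpen_iff.mp (isClosed_tsupport w).isOpen_compl 0 hK0
  have hG1cont : Continuous G1 := by
    rw [continuous_iff_continuousAt]
    intro x
    rcases eq_or_ne x 0 with rfl | hx
    · have hev : G1 =ᶠ[nhds (0:E2)] (fun _ => (0:ℝ)) := by
        filter_upwards [Metric.ball_mem_nhds (0:E2) hε0] with z hz
        have hgz : gradient w z = 0 := gradient_eq_zero_of_nmem (hεsub hz)
        simp only [hG1def, hgz]; simp
      exact hev.continuousAt
    · have hinner : ContinuousAt (fun x : E2 => ⟪x, gradient w x⟫) x :=
        (continuous_id.inner hgcont).continuousAt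
      have hdiv : ContinuousAt (fun x : E2 => ⟪x, gradient w x⟫/‖x‖) x :=
        hinner.div continuous_norm.continuousAt (norm_ne_zero_iff.mpr hx)
      exact continuousAt_const.mul (((hgcont.norm.pow 2).continuousAt).add
        (continuousAt_const.mul (hdiv.pow 2)))
  have hG1supp : Function.support G1 ⊆ tsupport w := fun x hx => by
    by_contra h
    have hgz : gradient w x = 0 := gradient_eq_zero_of_nmem h
    apply hx
    simp only [hG1def, hgz]; simp
  have hG1cs : HasCompactSupport G1 :=
    HasCompactSupport.of_support_subset_isCompact hKcpt hG1supp
  have hI1cs : HasCompactSupport (fun x : E2 => κ * ‖gradient w x‖^(2:ℕ)) := by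
    apply HasCompactSupport.of_support_subset_isCompact hKcpt
    intro x hx
    apply hgsupp
    intro h
    apply hx
    simp [h]
  have hG1int : IntegrableOn G1 B :=
    (hG1cont.integrable_of_hasCompactSupport hG1cs).integrableOn
  have hI1int : IntegrableOn (fun x : E2 => κ * ‖gradient w x‖^(2:ℕ)) B :=
    (hcont1.integrable_of_hasCompactSupport hI1cs).integrableOn
  -- change of variables: Dirichlet term
  have hfds : ∀ y ∈ s, HasFDerivWithinAt (T κ) (Dmap κ y) s y := fun y hy =>
    (hasFDerivAt_T κ (hsne y hy)).hasFDerivWithinAt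
  have hcv1 := integral_image_eq_integral_abs_det_fderiv_smul volume hsm hfds
    (T_injOn hκ0) G1
  rw [show T κ '' s = s from T_image hκ0] at hcv1
  have hA : (∫ x in B, ‖gradient (w ∘ T κ) x‖^(2:ℕ)) = ∫ x in B, G1 x := by
    calc (∫ x in B, ‖gradient (w ∘ T κ) x‖^(2:ℕ))
        = ∫ y in s, ‖gradient (w ∘ T κ) y‖^(2:ℕ) := (setIntegral_congr_set hae).symm
      _ = ∫ y in s, |(Dmap κ y).det| • G1 (T κ y) := by
          refine setIntegral_congr_fun hsm (fun y hy => ?_)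
          rw [smul_eq_mul, dirichlet_pointwise hκ0 hw (hsne y hy)]
      _ = ∫ x in s, G1 x := hcv1.symm
      _ = ∫ x in B, G1 x := setIntegral_congr_set hae
  -- change of variables: potential term
  have hcv2 := integral_image_eq_integral_abs_det_fderiv_smul volume hsm hfds
    (T_injOn hκ0) (fun x => κ * (‖x‖ ^ α * |uα x| ^ (p-1) * (w x)^(2:ℕ)))
  rw [show T κ '' s = s from T_image hκ0] at hcv2
  have hB : (∫ x in B, ‖x‖ ^ β * |uβ x| ^ (p-1) * ((w ∘ T κ) x)^(2:ℕ))
      = κ * ∫ x in B, ‖x‖ ^ α * |uα x| ^ (p-1) * (w x)^(2:ℕ) := by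
    calc (∫ x in B, ‖x‖ ^ β * |uβ x| ^ (p-1) * ((w ∘ T κ) x)^(2:ℕ))
        = ∫ y in s, ‖y‖ ^ β * |uβ y| ^ (p-1) * ((w ∘ T κ) y)^(2:ℕ) :=
          (setIntegral_congr_set hae).symm
      _ = ∫ y in s, |(Dmap κ y).det| •
            (κ * (‖T κ y‖ ^ α * |uα (T κ y)| ^ (p-1) * (w (T κ y))^(2:ℕ))) := by
          refine setIntegral_congr_fun hsm (fun y hy => ?_)
          rw [smul_eq_mul, Function.comp_apply,
            pot_pointwise p κ α β hp hκ0 hκβ uα uβ huβ w (hsne y hy)]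
      _ = ∫ x in s, κ * (‖x‖ ^ α * |uα x| ^ (p-1) * (w x)^(2:ℕ)) := hcv2.symm
      _ = κ * ∫ x in s, ‖x‖ ^ α * |uα x| ^ (p-1) * (w x)^(2:ℕ) := by
          rw [integral_const_mul]
      _ = κ * ∫ x in B, ‖x‖ ^ α * |uα x| ^ (p-1) * (w x)^(2:ℕ) := by
          rw [setIntegral_congr_set hae]
  -- pointwise inequality G1 ≤ κ‖∇w‖²
  have hpt : ∀ x ∈ B, G1 x ≤ κ * ‖gradient w x‖^(2:ℕ) := by
    intro x _
    rcases eq_or_ne x 0 with rfl | hx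
    · have hgz : gradient w 0 = 0 := gradient_eq_zero_of_nmem hK0
      simp [hG1def, hgz]
    · have hnx : (0:ℝ) < ‖x‖ := norm_pos_iff.mpr hx
      have hCS : |⟪x, gradient w x⟫| ≤ ‖x‖ * ‖gradient w x‖ := abs_real_inner_le_norm x _
      have h2 : (⟪x, gradient w x⟫/‖x‖)^(2:ℕ) ≤ ‖gradient w x‖^(2:ℕ) := by
        rw [div_pow, div_le_iff₀ (by positivity : (0:ℝ) < ‖x‖^(2:ℕ))]
        calc ⟪x, gradient w x⟫^(2:ℕ) = |⟪x, gradient w x⟫|^(2:ℕ) := (sq_abs _).symm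
          _ ≤ (‖x‖ * ‖gradient w x‖)^(2:ℕ) := pow_le_pow_left₀ (abs_nonneg _) hCS 2
          _ = ‖gradient w x‖^(2:ℕ) * ‖x‖^(2:ℕ) := by ring
      simp only [hG1def]
      rw [one_div_mul_eq_div, div_le_iff₀ hκ0]
      have hfac : (κ^(2:ℕ)-1) * (⟪x, gradient w x⟫/‖x‖)^(2:ℕ)
          ≤ (κ^(2:ℕ)-1) * ‖gradient w x‖^(2:ℕ) := by
        apply mul_le_mul_of_nonneg_left h2
        nlinarith
      nlinarith [norm_nonneg (gradient w x)]
  have hmono : (∫ x in B, G1 x) ≤ κ * ∫ x in B, ‖gradient w x‖^(2:ℕ) := by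
    exact (setIntegral_mono_on hG1int hI1int hBm hpt).trans_eq (integral_const_mul κ _)
  constructor
  · simp only [Q]
    rw [hA, hB]
    have : κ * ((∫ x in B, ‖gradient w x‖^(2:ℕ)) -
        p * ∫ x in B, ‖x‖ ^ α * |uα x| ^ (p-1) * (w x)^(2:ℕ))
        = κ * (∫ x in B, ‖gradient w x‖^(2:ℕ)) -
          p * (κ * ∫ x in B, ‖x‖ ^ α * |uα x| ^ (p-1) * (w x)^(2:ℕ)) := by ring
    rw [this]
    linarith
  · rintro ⟨W, hWrad⟩
    have hpt' : Set.EqOn G1 (fun x => κ * ‖gradient w x‖^(2:ℕ)) B := by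
      intro x _
      rcases eq_or_ne x 0 with rfl | hx
      · have hgz : gradient w 0 = 0 := gradient_eq_zero_of_nmem hK0
        simp [hG1def, hgz]
      · have hnx : (0:ℝ) < ‖x‖ := norm_pos_iff.mpr hx
        have hr := radial_key hw W hWrad hx
        simp only [hG1def]
        show (1/κ) * (‖gradient w x‖^(2:ℕ) +
          (κ^(2:ℕ)-1) * (⟪x, gradient w x⟫/‖x‖)^(2:ℕ)) = κ * ‖gradient w x‖^(2:ℕ)
        have h2 : (⟪x, gradient w x⟫/‖x‖)^(2:ℕ) = ‖gradient w x‖^(2:ℕ) := by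
          rw [div_pow, hr]
          rw [show ‖x‖*‖x‖ = ‖x‖^(2:ℕ) from (pow_two _).symm]
          field_simp
        rw [h2]
        field_simp
        ring
    have heq : (∫ x in B, G1 x) = κ * ∫ x in B, ‖gradient w x‖^(2:ℕ) := by
      rw [setIntegral_congr_fun hBm hpt', integral_const_mul]
    simp only [Q]
    rw [hA, hB, heq]
    ring
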